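/- arXiv:1712.00495 — 5 statements merged into one kernel-verified Lean document; each statement's English description precedes it below -/
import Mathlib

section
/- For every asymmetric digraph D of order n (a digraph in which no arc (u,v) has its reverse (v,u) also present), the diachromatic number satisfies dac(D) ≤ ⌈n/2⌉. -/
/-- The subset `S` of vertices induces an acyclic subdigraph of the digraph with
arc relation `A` (i.e. there is no directed cycle all of whose vertices lie in `S`). -/
def AcyclicSet {V : Type*} (A : V → V → Prop) (S : Set V) : Prop :=
  ∀ v : V, ¬ Relation.TransGen (fun x y => x ∈ S ∧ y ∈ S ∧ A x y) v v

/-- `c` is an acyclic vertex coloring of the digraph `A` with `k` colors: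
`c` is surjective and every chromatic class induces an acyclic subdigraph. -/
def IsAcyclicColoring {V : Type*} (A : V → V → Prop) {k : ℕ} (c : V → Fin k) : Prop :=
  Function.Surjective c ∧ ∀ i : Fin k, AcyclicSet A {v | c v = i}

/-- `c` is a complete vertex coloring of the digraph `A` with `k` colors:
`c` is surjective and for every ordered pair of distinct colors `(i, j)` there is
an arc `(u, v)` with `c u = i` and `c v = j`. -/
def IsCompleteColoring {V : Type*} (A : V → V → Prop) {k : ℕ} (c : V → Fin k) : Prop :=
  Function.Surjective c ∧
    ∀ i j : Fin k, i ≠ j → ∃ u v : V, A u v ∧ c u = i ∧ c v = j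

/-- The diachromatic number: the largest `k` admitting a complete acyclic `k`-coloring. -/
noncomputable def dac {V : Type*} (A : V → V → Prop) : ℕ :=
  sSup {k | ∃ c : V → Fin k, IsAcyclicColoring A c ∧ IsCompleteColoring A c}

/-- The dichromatic number: the smallest `k` admitting an acyclic `k`-coloring. -/
noncomputable def dc {V : Type*} (A : V → V → Prop) : ℕ :=
  sInf {k | ∃ c : V → Fin k, IsAcyclicColoring A c}

/-- The pseudoachromatic number: the largest `k` admitting a complete `k`-coloring. -/
noncomputable def psi {V : Type*} (A : V → V → Prop) : ℕ :=
  sSup {k | ∃ c : V → Fin k, IsCompleteColoring A c}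

/-- `A` is a tournament: no loops, and for distinct vertices exactly one of the
two possible arcs is present. -/
def IsTournament {V : Type*} (A : V → V → Prop) : Prop :=
  (∀ v : V, ¬ A v v) ∧ ∀ u v : V, u ≠ v → (A u v ↔ ¬ A v u)

/-- For every asymmetric digraph `D` of order `n`, `dac(D) ≤ ⌈n/2⌉`. -/
theorem stmt2 {V : Type*} [Fintype V] (A : V → V → Prop)
    (hirr : ∀ v : V, ¬ A v v)
    (hasym : ∀ u v : V, A u v → ¬ A v u) :
    dac A ≤ (Fintype.card V + 1) / 2 := by
  classical
  apply csSup_le'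
  rintro k ⟨c, -, hsurj, hcomp⟩
  rw [Nat.le_div_iff_mul_le (by norm_num : 0 < 2)]
  set S : Fin k → Finset V := fun i => Finset.univ.filter (fun v => c v = i) with hS
  have hsum : ∑ i, (S i).card = Fintype.card V := by
    rw [← Finset.card_univ]
    exact (Finset.card_eq_sum_card_fiberwise (fun v _ => Finset.mem_univ (c v))).symm
  have hpos : ∀ i, 1 ≤ (S i).card := by
    intro i
    obtain ⟨v, hv⟩ := hsurj i
    exact Finset.card_pos.mpr ⟨v, by simp [hS, hv]⟩
  have hone : ∀ i j : Fin k, i ≠ j → (S i).card = 1 → (S j).card = 1 → False := by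
    intro i j hij hi hj
    obtain ⟨u, hu⟩ := Finset.card_eq_one.mp hi
    obtain ⟨v, hv⟩ := Finset.card_eq_one.mp hj
    have hmemu : ∀ x, c x = i → x = u := by
      intro x hx
      have hx2 : x ∈ S i := by simp [hS, hx]
      rw [hu] at hx2; simpa using hx2
    have hmemv : ∀ x, c x = j → x = v := by
      intro x hx
      have hx2 : x ∈ S j := by simp [hS, hx]
      rw [hv] at hx2; simpa using hx2
    obtain ⟨a, b, hab, ha, hb⟩ := hcomp i j hij
    obtain ⟨a', b', hab', ha', hb'⟩ := hcomp j i hij.symm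
    have e1 := hmemu a ha; subst e1
    have e2 := hmemv b hb; subst e2
    have e3 := hmemv a' ha'; subst e3
    have e4 := hmemu b' hb'; subst e4
    exact hasym _ _ hab hab'
  by_cases hex : ∃ i, (S i).card = 1
  · obtain ⟨i0, hi0⟩ := hex
    have h2 : ∀ j ∈ Finset.univ.erase i0, 2 ≤ (S j).card := by
      intro j hj
      have hji : j ≠ i0 := (Finset.mem_erase.mp hj).1
      have h1 := hpos j
      rcases Nat.lt_or_ge (S j).card 2 with h | h
      · exfalso
        exact hone j i0 hji (by omega) hi0
      · exact h
    have hle : (Finset.univ.erase i0).card • 2 ≤ ∑ j ∈ Finset.univ.erase i0, (S j).card :=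
      Finset.card_nsmul_le_sum _ _ _ h2
    have hcard : (Finset.univ.erase i0).card = k - 1 := by
      rw [Finset.card_erase_of_mem (Finset.mem_univ i0), Finset.card_univ, Fintype.card_fin]
    have hsplit : ∑ j ∈ Finset.univ.erase i0, (S j).card + (S i0).card = ∑ i, (S i).card :=
      Finset.sum_erase_add _ _ (Finset.mem_univ i0)
    have hk : 1 ≤ k := i0.pos
    rw [hcard, smul_eq_mul] at hle
    omega
  · push_neg at hex
    have h2 : ∀ j ∈ (Finset.univ : Finset (Fin k)), 2 ≤ (S j).card := by
      intro j _
      have h1 := hpos j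
      have h3 := hex j
      omega
    have hle : (Finset.univ : Finset (Fin k)).card • 2 ≤ ∑ j, (S j).card :=
      Finset.card_nsmul_le_sum _ _ _ h2
    rw [Finset.card_univ, Fintype.card_fin, smul_eq_mul] at hle
    omega
end

section
/- For each vertex u in a nontrivial digraph D (a digraph with at least two vertices), dac(D) − 1 ≤ dac(D − u) ≤ dac(D), where D − u is the digraph obtained from D by deleting the vertex u and all arcs incident with it. -/
/-! Removing `u` from a complete acyclic coloring of `D` costs at most one color. If the classes
stay complete in `D - u`, keep them; if the class of `u` was `{u}`, drop it; otherwise some pair of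
classes has lost all its arcs in one direction, one of them is the class of `u`, and merging the
two creates no cycle since every arc between them goes the same way.

Conversely, a complete acyclic coloring of `D - u` extends to `D`: if some class receives no arc
from `u`, or sends none to `u`, then `u` joins it without closing a cycle; otherwise `u` has arcs
to and from every class and forms a new class of its own. -/

open Function Relation

section AcyclicSet

variable {V W : Type*} {A : V → V → Prop}

theorem AcyclicSet.mono {S T : Set V} (hS : AcyclicSet A S) (hTS : T ⊆ S) : AcyclicSet A T :=
  fun v hv => hS v (hv.mono (fun _ _ h => ⟨hTS h.1, hTS h.2.1, h.2.2⟩) v v)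

theorem mem_of_transGen_restrict {S : Set V} {x y : V}
    (h : TransGen (fun a b => a ∈ S ∧ b ∈ S ∧ A a b) x y) : y ∈ S :=
  (TransGen.tail'_iff.1 h).choose_spec.2.2.1

theorem acyclicSet_empty : AcyclicSet A ∅ := fun _ hv => mem_of_transGen_restrict hv

theorem acyclicSet_singleton {u : V} (hu : ¬ A u u) : AcyclicSet A {u} := fun _ hv => by
  obtain ⟨_, -, rfl, rfl, h⟩ := TransGen.tail'_iff.1 hv
  exact hu h

theorem AcyclicSet.union {S T : Set V} (hS : AcyclicSet A S) (hT : AcyclicSet A T)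
    (hST : ∀ x ∈ S, ∀ y ∈ T, ¬ A x y) : AcyclicSet A (S ∪ T) := by
  intro v hv
  -- with no arc from `S` to `T`, a walk in `S ∪ T` stays in `S` once it starts there,
  -- and was in `T` all along if it ends there
  have stays_in_S :
      ∀ {x y}, TransGen (fun a b => a ∈ S ∪ T ∧ b ∈ S ∪ T ∧ A a b) x y →
      x ∈ S → TransGen (fun a b => a ∈ S ∧ b ∈ S ∧ A a b) x y := by
    intro x y hxy
    induction hxy using TransGen.head_induction_on with
    | single h =>
      exact fun hx => .single ⟨hx, h.2.1.resolve_right fun hy => hST _ hx _ hy h.2.2, h.2.2⟩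
    | head h _ ih =>
      intro hx
      have hc := h.2.1.resolve_right fun hc => hST _ hx _ hc h.2.2
      exact (ih hc).head ⟨hx, hc, h.2.2⟩
  have was_in_T : ∀ {x y}, TransGen (fun a b => a ∈ S ∪ T ∧ b ∈ S ∪ T ∧ A a b) x y →
      y ∈ T → TransGen (fun a b => a ∈ T ∧ b ∈ T ∧ A a b) x y := by
    intro x y hxy
    induction hxy with
    | single h =>
      exact fun hy => .single ⟨h.1.resolve_left fun hx => hST _ hx _ hy h.2.2, hy, h.2.2⟩
    | tail _ h ih =>
      intro hy
      have hb := h.1.resolve_left fun hb => hST _ hb _ hy h.2.2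
      exact (ih hb).tail ⟨hb, hy, h.2.2⟩
  rcases mem_of_transGen_restrict hv with hvS | hvT
  · exact hS v (stays_in_S hv hvS)
  · exact hT v (was_in_T hv hvT)

theorem AcyclicSet.preimage {S : Set V} (hS : AcyclicSet A S) (f : W → V) :
    AcyclicSet (A on f) (f ⁻¹' S) :=
  fun w hw => hS (f w) (hw.lift f (fun _ _ h => h) w w)

theorem AcyclicSet.image {f : W → V} (hf : Injective f) {S : Set W}
    (hS : AcyclicSet (A on f) S) : AcyclicSet A (f '' S) := by
  intro v hv
  have lift : ∀ {x y}, TransGen (fun a b => a ∈ f '' S ∧ b ∈ f '' S ∧ A a b) x y →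
      ∀ {x' y'}, f x' = x → f y' = y →
        TransGen (fun a b => a ∈ S ∧ b ∈ S ∧ A (f a) (f b)) x' y' := by
    intro x y hxy
    induction hxy with
    | single h =>
      rintro x' y' rfl rfl
      obtain ⟨x'', hx'', hxx⟩ := h.1
      obtain ⟨y'', hy'', hyy⟩ := h.2.1
      exact .single ⟨hf hxx ▸ hx'', hf hyy ▸ hy'', h.2.2⟩
    | tail _ h ih =>
      rintro x' y' rfl rfl
      obtain ⟨b', hb', rfl⟩ := h.1
      obtain ⟨y'', hy'', hyy⟩ := h.2.1
      exact (ih rfl rfl).tail ⟨hb', hf hyy ▸ hy'', h.2.2⟩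
  obtain ⟨w, -, rfl⟩ := mem_of_transGen_restrict hv
  exact hS w (lift hv rfl rfl)

end AcyclicSet

section Coloring

variable {V W α β : Type*} {A : V → V → Prop}

structure IsCompleteAcyclicColoring (A : V → V → Prop) (c : V → α) : Prop where
  surjective : Surjective c
  acyclic : ∀ i, AcyclicSet A {v | c v = i}
  complete : ∀ i j, i ≠ j → ∃ x y, A x y ∧ c x = i ∧ c y = j

theorem IsCompleteAcyclicColoring.comp_equiv {c : V → α} (hc : IsCompleteAcyclicColoring A c)
    (e : α ≃ β) : IsCompleteAcyclicColoring A (e ∘ c) where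
  surjective := e.surjective.comp hc.surjective
  acyclic i := by
    simpa only [comp_apply, ← e.eq_symm_apply] using hc.acyclic (e.symm i)
  complete i j hij := by
    obtain ⟨x, y, hxy, hx, hy⟩ := hc.complete (e.symm i) (e.symm j) (by simpa using hij)
    exact ⟨x, y, hxy, by simp [hx], by simp [hy]⟩

theorem card_le_dac [Fintype V] [Fintype α] {c : V → α} (hc : IsCompleteAcyclicColoring A c) :
    Fintype.card α ≤ dac A := by
  have bdd : BddAbove {k | ∃ c : V → Fin k, IsAcyclicColoring A c ∧ IsCompleteColoring A c} :=
    ⟨Fintype.card V, fun k ⟨c, hc, _⟩ => by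
      simpa using Fintype.card_le_of_surjective c hc.1⟩
  have hc' := hc.comp_equiv (Fintype.equivFin α)
  exact le_csSup bdd ⟨_, ⟨hc'.surjective, hc'.acyclic⟩, hc'.surjective, hc'.complete⟩

theorem dac_le_of_forall {m : ℕ}
    (h : ∀ n (c : V → Fin n), IsCompleteAcyclicColoring A c → n ≤ m) : dac A ≤ m :=
  csSup_le' fun n ⟨c, hac, hco⟩ => h n c ⟨hac.1, hac.2, hco.2⟩

theorem acyclicSet_merge [DecidableEq α] {R : W → W → Prop} {g : W → α}
    (hg : ∀ k, AcyclicSet R {w | g w = k}) {i j : α}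
    (hij : (∀ x y, g x = i → g y = j → ¬ R x y) ∨ (∀ x y, g x = j → g y = i → ¬ R x y))
    (k : α) :
    AcyclicSet R {w | (if g w = i then j else g w) = k} := by
  by_cases hk : k = j
  · subst hk
    have hclass : {w | (if g w = i then k else g w) = k} = {w | g w = i} ∪ {w | g w = k} := by
      ext w
      by_cases h : g w = i <;> simp [h]
    rw [hclass]
    rcases hij with hij | hij
    · exact (hg i).union (hg k) fun x hx y hy => hij x y hx hy
    · rw [Set.union_comm]
      exact (hg k).union (hg i) fun x hx y hy => hij x y hx hy
  · refine (hg k).mono fun w hw => ?_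
    by_cases h : g w = i <;> simp_all

end Coloring

section DeleteVertex

variable {V α : Type*} {A : V → V → Prop} {u : V}

def deleteVertex (A : V → V → Prop) (u : V) : {v // v ≠ u} → {v // v ≠ u} → Prop :=
  A on Subtype.val

theorem card_le_dac_deleteVertex_add_one_of_agree [Fintype V] [Fintype α] {c : V → α}
    (hc : IsCompleteAcyclicColoring A c) (f : {v // v ≠ u} → α) (hfu : ∀ x, f x ≠ c u)
    (hf : ∀ x, c x.1 ≠ c u → f x = c x.1)
    (hacyc : ∀ i, AcyclicSet (deleteVertex A u) {x | f x = i}) :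
    Fintype.card α ≤ dac (deleteVertex A u) + 1 := by
  classical
  let g : {v // v ≠ u} → {i // i ≠ c u} := fun x => ⟨f x, hfu x⟩
  have hg : ∀ {x : {v // v ≠ u}} {i : {i // i ≠ c u}}, c x.1 = i → g x = i := fun {x i} h =>
    Subtype.ext ((hf x (h ▸ i.2)).trans h)
  have hcol : IsCompleteAcyclicColoring (deleteVertex A u) g := by
    refine ⟨fun i => ?_, fun i => ?_, fun i j hij => ?_⟩
    · obtain ⟨v, hv⟩ := hc.surjective i.1
      exact ⟨⟨v, by rintro rfl; exact i.2 hv.symm⟩, hg hv⟩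
    · simpa only [g, Subtype.ext_iff] using hacyc i.1
    · obtain ⟨x, y, hxy, hx, hy⟩ := hc.complete i.1 j.1 (Subtype.coe_ne_coe.2 hij)
      exact ⟨⟨x, by rintro rfl; exact i.2 hx.symm⟩, ⟨y, by rintro rfl; exact j.2 hy.symm⟩,
        hxy, hg hx, hg hy⟩
  have hcard : Fintype.card {i // i ≠ c u} + 1 = Fintype.card α := by
    have : Nonempty α := ⟨c u⟩
    simpa using Nat.sub_add_cancel Fintype.card_pos
  have := card_le_dac hcol
  omega

theorem card_le_dac_deleteVertex_add_one_of_merge [Fintype V] [Fintype α] {c : V → α}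
    (hc : IsCompleteAcyclicColoring A c) {j : α} (hj : j ≠ c u)
    (hno : (∀ x y : {v // v ≠ u}, c x = c u → c y = j → ¬ A x y) ∨
      (∀ x y : {v // v ≠ u}, c x = j → c y = c u → ¬ A x y)) :
    Fintype.card α ≤ dac (deleteVertex A u) + 1 := by
  classical
  exact card_le_dac_deleteVertex_add_one_of_agree hc (fun x => if c x = c u then j else c x)
    (fun x => by split_ifs with h <;> assumption) (fun _ hx => if_neg hx)
    (acyclicSet_merge (fun i => (hc.acyclic i).preimage Subtype.val) hno)

theorem card_le_dac_deleteVertex_add_one [Fintype V] [Fintype α] {c : V → α}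
    (hc : IsCompleteAcyclicColoring A c) (u : V) :
    Fintype.card α ≤ dac (deleteVertex A u) + 1 := by
  classical
  let cr : {v // v ≠ u} → α := c ∘ Subtype.val
  have hcr : ∀ i, AcyclicSet (deleteVertex A u) {x | cr x = i} :=
    fun i => (hc.acyclic i).preimage Subtype.val
  by_cases hcomplete : ∀ i j, i ≠ j → ∃ x y, deleteVertex A u x y ∧ cr x = i ∧ cr y = j
  · by_cases hsurj : Surjective cr
    · exact (card_le_dac ⟨hsurj, hcr, hcomplete⟩).trans (Nat.le_succ _)
    · have hmiss : ∀ x, cr x ≠ c u := by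
        refine fun x hx => hsurj fun i => ?_
        by_cases hi : i = c u
        · exact ⟨x, hx.trans hi.symm⟩
        · obtain ⟨v, rfl⟩ := hc.surjective i
          exact ⟨⟨v, by rintro rfl; exact hi rfl⟩, rfl⟩
      exact card_le_dac_deleteVertex_add_one_of_agree hc cr hmiss (fun _ _ => rfl) hcr
  · push Not at hcomplete
    obtain ⟨i, j, hij, hno⟩ := hcomplete
    have hu : i = c u ∨ j = c u := by
      by_contra! h
      obtain ⟨x, y, hxy, hx, hy⟩ := hc.complete i j hij
      exact hno ⟨x, by rintro rfl; exact h.1 hx.symm⟩ ⟨y, by rintro rfl; exact h.2 hy.symm⟩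
        hxy hx hy
    rcases hu with rfl | rfl
    · exact card_le_dac_deleteVertex_add_one_of_merge hc hij.symm
        (Or.inl fun x y hx hy hxy => hno x y hxy hx hy)
    · exact card_le_dac_deleteVertex_add_one_of_merge hc hij
        (Or.inr fun x y hx hy hxy => hno x y hxy hx hy)

def extendAt [DecidableEq V] (u : V) (c : {v // v ≠ u} → α) (a : α) (v : V) : α :=
  if h : v = u then a else c ⟨v, h⟩

@[simp]
theorem extendAt_self [DecidableEq V] (c : {v // v ≠ u} → α) (a : α) : extendAt u c a u = a :=
  dif_pos rfl

@[simp]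
theorem extendAt_val [DecidableEq V] (c : {v // v ≠ u} → α) (a : α) (x : {v // v ≠ u}) :
    extendAt u c a x = c x :=
  dif_neg x.2

theorem setOf_extendAt_eq [DecidableEq V] (c : {v // v ≠ u} → α) (a i : α) :
    {v | extendAt u c a v = i} = Subtype.val '' {x | c x = i} ∪ {v | v = u ∧ a = i} := by
  ext v
  rcases eq_or_ne v u with rfl | hv
  · simp
  · lift v to {v // v ≠ u} using hv
    simp [v.2]

theorem acyclicSet_extendAt [DecidableEq V] (hu : ¬ A u u) {c : {v // v ≠ u} → α}
    (hc : ∀ i, AcyclicSet (deleteVertex A u) {x | c x = i}) {a : α}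
    (ha : (∀ x, c x = a → ¬ A u x) ∨ (∀ x, c x = a → ¬ A x u)) (i : α) :
    AcyclicSet A {v | extendAt u c a v = i} := by
  have himage : AcyclicSet A (Subtype.val '' {x | c x = i}) :=
    (hc i).image Subtype.val_injective
  rw [setOf_extendAt_eq]
  by_cases hai : a = i
  · subst hai
    simp only [and_true, Set.ofPred_eq_eq_singleton]
    rcases ha with ha | ha
    · rw [Set.union_comm]
      refine (acyclicSet_singleton hu).union himage ?_
      rintro _ rfl _ ⟨x, hx, rfl⟩
      exact ha x hx
    · refine himage.union (acyclicSet_singleton hu) ?_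
      rintro _ ⟨x, hx, rfl⟩ _ rfl
      exact ha x hx
  · simpa [hai] using himage

theorem IsCompleteAcyclicColoring.extendAt_join [DecidableEq V] (hu : ¬ A u u)
    {c : {v // v ≠ u} → α} (hc : IsCompleteAcyclicColoring (deleteVertex A u) c) {a : α}
    (ha : (∀ x, c x = a → ¬ A u x) ∨ (∀ x, c x = a → ¬ A x u)) :
    IsCompleteAcyclicColoring A (extendAt u c a) := by
  refine ⟨fun i => ?_, acyclicSet_extendAt hu hc.acyclic ha, fun i j hij => ?_⟩
  · obtain ⟨x, rfl⟩ := hc.surjective i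
    exact ⟨x, extendAt_val c a x⟩
  · obtain ⟨x, y, hxy, rfl, rfl⟩ := hc.complete i j hij
    exact ⟨x, y, hxy, extendAt_val c a x, extendAt_val c a y⟩

theorem IsCompleteAcyclicColoring.extendAt_none [DecidableEq V] (hu : ¬ A u u)
    {c : {v // v ≠ u} → α} (hc : IsCompleteAcyclicColoring (deleteVertex A u) c)
    (hsees : ∀ a, (∃ x, c x = a ∧ A u x) ∧ (∃ x, c x = a ∧ A x u)) :
    IsCompleteAcyclicColoring A (extendAt u (some ∘ c) none) := by
  refine ⟨fun i => ?_, acyclicSet_extendAt hu (fun i => ?_) (Or.inl fun x hx => ?_), ?_⟩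
  · cases i with
    | none => exact ⟨u, extendAt_self _ _⟩
    | some i =>
      obtain ⟨x, rfl⟩ := hc.surjective i
      exact ⟨x, extendAt_val _ _ x⟩
  · cases i with
    | none => simpa using acyclicSet_empty
    | some i => simpa using hc.acyclic i
  · exact absurd hx (Option.some_ne_none _)
  · rintro (_ | i) (_ | j) hij
    · exact absurd rfl hij
    · obtain ⟨x, rfl, hx⟩ := (hsees j).1
      exact ⟨u, x, hx, by simp, by simp⟩
    · obtain ⟨x, rfl, hx⟩ := (hsees i).2
      exact ⟨x, u, hx, by simp, by simp⟩
    · obtain ⟨x, y, hxy, rfl, rfl⟩ := hc.complete i j (by simpa using hij)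
      exact ⟨x, y, hxy, by simp, by simp⟩

theorem card_le_dac_of_deleteVertex [Fintype V] [Fintype α] (hu : ¬ A u u)
    {c : {v // v ≠ u} → α} (hc : IsCompleteAcyclicColoring (deleteVertex A u) c) :
    Fintype.card α ≤ dac A := by
  classical
  by_cases h : ∃ a, (∀ x, c x = a → ¬ A u x) ∨ (∀ x, c x = a → ¬ A x u)
  · obtain ⟨a, ha⟩ := h
    exact card_le_dac (hc.extendAt_join hu ha)
  · push Not at h
    have hcard := card_le_dac (hc.extendAt_none hu h)
    rw [Fintype.card_option] at hcard
    omega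

end DeleteVertex

theorem stmt4_general {V : Type*} [Fintype V] (A : V → V → Prop)
    (hirr : ∀ v : V, ¬ A v v) (u : V) :
    dac A - 1 ≤ dac (fun x y : {v : V // v ≠ u} => A x.1 y.1) ∧
      dac (fun x y : {v : V // v ≠ u} => A x.1 y.1) ≤ dac A := by
  show dac A - 1 ≤ dac (deleteVertex A u) ∧ dac (deleteVertex A u) ≤ dac A
  refine ⟨tsub_le_iff_right.2 (dac_le_of_forall fun n c hc => ?_),
    dac_le_of_forall fun n c hc => ?_⟩
  · simpa using card_le_dac_deleteVertex_add_one hc u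
  · simpa using card_le_dac_of_deleteVertex (hirr u) hc

/-- For each vertex `u` in a nontrivial digraph `D`,
`dac(D) - 1 ≤ dac(D - u) ≤ dac(D)`. -/
theorem stmt4 {V : Type*} [Fintype V] [DecidableEq V] (A : V → V → Prop)
    (hirr : ∀ v : V, ¬ A v v)
    (hn : 2 ≤ Fintype.card V) (u : V) :
    dac A - 1 ≤ dac (fun x y : {v : V // v ≠ u} => A x.1 y.1) ∧
      dac (fun x y : {v : V // v ≠ u} => A x.1 y.1) ≤ dac A :=
  stmt4_general A hirr u
end

section
/- For each arc f = (u,v) in a nonempty digraph D, dac(D) − 1 ≤ dac(D − f) ≤ dac(D) + 1, where D − f is the digraph obtained from D by deleting the arc f. -/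
/-!
Deleting arcs that leave a vertex `u` changes `dac` by at most one. An optimal colouring of `D`
stays acyclic in `D - f` and stays complete except possibly for pairs involving the colour of `u`.
An optimal colouring of `D - f` becomes acyclic in `D` once `u` gets a class of its own, and is
then complete except possibly for pairs involving the new colour or the old colour of `u`.
Such an almost complete colouring is repaired by merging each exceptional colour that misses some
other colour in one direction into that colour: the arcs between the two classes go one way only,
so the merged class stays acyclic, and each merge costs one colour.
-/

open Finset

namespace Relation.TransGen

variable {α : Type*} {r : α → α → Prop} {P : α → Prop} {a b : α}

lemma restrict_of_forward (hP : ∀ {x y}, r x y → P x → P y) (h : TransGen r a b) (ha : P a) :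
    TransGen (fun x y => P x ∧ P y ∧ r x y) a b := by
  induction h using Relation.TransGen.head_induction_on with
  | single hab => exact single ⟨ha, hP hab ha, hab⟩
  | head hac _ ih => exact head ⟨ha, hP hac ha, hac⟩ (ih (hP hac ha))

lemma restrict_of_backward (hP : ∀ {x y}, r x y → P y → P x) (h : TransGen r a b) (hb : P b) :
    TransGen (fun x y => P x ∧ P y ∧ r x y) a b := by
  induction h with
  | single hab => exact single ⟨hP hab hb, hb, hab⟩
  | tail _ hbc ih => exact tail (ih (hP hbc hb)) ⟨hP hbc hb, hb, hbc⟩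

end Relation.TransGen

namespace AcyclicSet

variable {V : Type*} {A B : V → V → Prop} {S T : Set V}

lemma of_subset (hT : AcyclicSet B T) (hST : S ⊆ T) (hAB : ∀ x ∈ S, ∀ y ∈ S, A x y → B x y) :
    AcyclicSet A S := fun w hw =>
  hT w <| Relation.TransGen.mono
    (fun x y ⟨hx, hy, hxy⟩ => ⟨hST hx, hST hy, hAB x hx y hy hxy⟩) w w hw

lemma union_s6 (hS : AcyclicSet A S) (hT : AcyclicSet A T) (hST : ∀ x ∈ S, ∀ y ∈ T, ¬ A x y) :
    AcyclicSet A (S ∪ T) := by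
  intro w hw
  have stays {x y : V} : (x ∈ S ∪ T ∧ y ∈ S ∪ T ∧ A x y) → x ∈ S → y ∈ S :=
    fun ⟨_, hy, hxy⟩ hx => hy.resolve_right fun hyT => hST _ hx _ hyT hxy
  by_cases hwS : w ∈ S
  · refine hS w (Relation.TransGen.mono ?_ w w
      (hw.restrict_of_forward (P := (· ∈ S)) stays hwS))
    exact fun x y ⟨hx, hy, _, _, hxy⟩ => ⟨hx, hy, hxy⟩
  · refine hT w (Relation.TransGen.mono ?_ w w
      (hw.restrict_of_backward (P := (· ∉ S)) (fun hxy hy hx => hy (stays hxy hx)) hwS))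
    exact fun x y ⟨hx, hy, hxS, hyS, hxy⟩ => ⟨hxS.resolve_left hx, hyS.resolve_left hy, hxy⟩

lemma of_delete_out_arcs {A' : V → V → Prop} {u : V} (hu : ¬ A u u)
    (hagree : ∀ x y, x ≠ u → A x y → A' x y) (hT : AcyclicSet A' T) (hST : S ⊆ T)
    (hS : u ∈ S → ∀ y ∈ S, y = u) : AcyclicSet A S :=
  hT.of_subset hST fun x hx y hy hxy => by
    by_cases hxu : x = u
    · subst hxu
      exact absurd (hS hx y hy ▸ hxy) hu
    · exact hagree x y hxu hxy

end AcyclicSet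

section Recoloring

variable {V ι : Type*}

def IsCompleteOutside (A : V → V → Prop) (g : V → ι) (S : Finset ι) : Prop :=
  ∀ x y, g x ≠ g y → g x ∉ S → g y ∉ S → ∃ x' y', A x' y' ∧ g x' = g x ∧ g y' = g y

variable [DecidableEq ι] {A : V → V → Prop}

def mergeColor (g : V → ι) (a b : ι) : V → ι := fun w => if g w = a then b else g w

lemma acyclicSet_mergeColor {g : V → ι} {a b : ι} (hacyc : ∀ i, AcyclicSet A {w | g w = i})
    (hdir : (∀ x y, A x y → g x = a → g y ≠ b) ∨ (∀ x y, A x y → g x = b → g y ≠ a)) (i : ι) :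
    AcyclicSet A {w | mergeColor g a b w = i} := by
  by_cases hib : i = b
  · subst hib
    have hunion : {w | mergeColor g a i w = i} = {w | g w = a} ∪ {w | g w = i} := by
      ext w
      by_cases hw : g w = a <;> simp [mergeColor, hw]
    rw [hunion]
    rcases hdir with hab | hba
    · exact (hacyc a).union_s6 (hacyc i) fun x hx y hy hxy => hab x y hxy hx hy
    · rw [Set.union_comm]
      exact (hacyc i).union_s6 (hacyc a) fun x hx y hy hxy => hba x y hxy hx hy
  · refine (hacyc i).of_subset (fun w hw => ?_) fun _ _ _ _ => id
    by_cases hw : g w = a <;> simp_all [mergeColor]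

lemma isCompleteOutside_mergeColor {g : V → ι} {a : ι} {S : Finset ι} {z : V} (hza : g z ≠ a)
    (hcomp : IsCompleteOutside A g (insert a S)) :
    IsCompleteOutside A (mergeColor g a (g z)) S := by
  have hval : ∀ w, ∃ w', g w' = mergeColor g a (g z) w ∧ g w' ≠ a := fun w => by
    by_cases hw : g w = a
    · exact ⟨z, by simp [mergeColor, hw], hza⟩
    · exact ⟨w, by simp [mergeColor, hw], hw⟩
  intro x y hxy hx hy
  obtain ⟨x₁, hx₁, hx₁a⟩ := hval x
  obtain ⟨y₁, hy₁, hy₁a⟩ := hval y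
  rw [← hx₁, ← hy₁] at hxy ⊢
  rw [← hx₁] at hx
  rw [← hy₁] at hy
  obtain ⟨x', y', hA, hx', hy'⟩ := hcomp x₁ y₁ hxy (by simp [hx₁a, hx]) (by simp [hy₁a, hy])
  refine ⟨x', y', hA, ?_, ?_⟩
  · rw [mergeColor, if_neg (hx' ▸ hx₁a), hx']
  · rw [mergeColor, if_neg (hy' ▸ hy₁a), hy']

lemma card_image_le_card_image_mergeColor_add_one [Fintype V] (g : V → ι) (a b : ι) :
    #(univ.image g) ≤ #(univ.image (mergeColor g a b)) + 1 := by
  have hsub : (univ.image g).erase a ⊆ univ.image (mergeColor g a b) := fun i hi => by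
    obtain ⟨hia, w, -, rfl⟩ := by simpa using hi
    exact mem_image.mpr ⟨w, mem_univ w, by simp [mergeColor, hia]⟩
  have := card_le_card hsub
  have := pred_card_le_card_erase (s := univ.image g) (a := a)
  omega

end Recoloring

section Diachromatic

variable {V : Type*} [Fintype V] {A : V → V → Prop}

lemma dac_bddAbove (A : V → V → Prop) :
    BddAbove {k | ∃ c : V → Fin k, IsAcyclicColoring A c ∧ IsCompleteColoring A c} :=
  ⟨Fintype.card V, fun _ ⟨c, ⟨hc, _⟩, _⟩ => by simpa using Fintype.card_le_of_surjective c hc⟩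

lemma exists_coloring_dac (h : dac A ≠ 0) :
    ∃ c : V → Fin (dac A), IsAcyclicColoring A c ∧ IsCompleteColoring A c := by
  refine Nat.sSup_mem (Set.nonempty_iff_ne_empty.mpr fun hempty => h ?_) (dac_bddAbove A)
  rw [dac, hempty, csSup_empty, bot_eq_zero]

variable {ι : Type*} [DecidableEq ι]

lemma card_image_le_dac {g : V → ι} (hacyc : ∀ i, AcyclicSet A {w | g w = i})
    (hcomp : IsCompleteOutside A g ∅) : #(univ.image g) ≤ dac A := by
  set T := univ.image g
  let c : V → Fin #T := fun w => T.equivFin ⟨g w, mem_image_of_mem g (mem_univ w)⟩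
  have hc (w : V) (i : Fin #T) : c w = i ↔ g w = T.equivFin.symm i := by
    simp [c, ← Equiv.eq_symm_apply, Subtype.ext_iff]
  have hsurj : Function.Surjective c := fun i => by
    obtain ⟨w, -, hw⟩ := mem_image.mp (T.equivFin.symm i).2
    exact ⟨w, (hc w i).2 hw⟩
  refine le_csSup (dac_bddAbove A) ⟨c, ⟨hsurj, fun i => ?_⟩, hsurj, fun i j hij => ?_⟩
  · simpa only [hc] using hacyc (T.equivFin.symm i)
  · obtain ⟨x, rfl⟩ := hsurj i
    obtain ⟨y, rfl⟩ := hsurj j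
    obtain ⟨x', y', hA, hx, hy⟩ :=
      hcomp x y (fun h => hij (by simp [c, h])) (notMem_empty _) (notMem_empty _)
    exact ⟨x', y', hA, by simp [c, hx], by simp [c, hy]⟩

theorem card_image_sub_card_le_dac (S : Finset ι) {g : V → ι}
    (hacyc : ∀ i, AcyclicSet A {w | g w = i}) (hcomp : IsCompleteOutside A g S) :
    #(univ.image g) - #S ≤ dac A := by
  induction S using Finset.induction_on generalizing g with
  | empty => simpa using card_image_le_dac hacyc hcomp
  | insert a S ha ih =>
    rw [card_insert_of_notMem ha]
    by_cases hS : IsCompleteOutside A g S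
    · have := ih hacyc hS
      omega
    suffices ∃ z, g z ≠ a ∧ ((∀ x y, A x y → g x = a → g y ≠ g z) ∨
        (∀ x y, A x y → g x = g z → g y ≠ a)) by
      obtain ⟨z, hza, hdir⟩ := this
      have := ih (acyclicSet_mergeColor hacyc hdir) (isCompleteOutside_mergeColor hza hcomp)
      have := card_image_le_card_image_mergeColor_add_one g a (g z)
      omega
    obtain ⟨x, y, hxy, hx, hy, hno⟩ : ∃ x y, g x ≠ g y ∧ g x ∉ S ∧ g y ∉ S ∧
        ∀ x' y', A x' y' → g x' = g x → g y' ≠ g y := by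
      simpa [IsCompleteOutside] using hS
    by_cases hxa : g x = a
    · exact ⟨y, hxa ▸ hxy.symm, Or.inl fun x' y' hA hx' => hno x' y' hA (hx'.trans hxa.symm)⟩
    · have hya : g y = a := by
        by_contra hya
        obtain ⟨x', y', hA, hx', hy'⟩ := hcomp x y hxy (by simp [hxa, hx]) (by simp [hya, hy])
        exact hno x' y' hA hx' hy'
      exact ⟨x, hxa, Or.inr fun x' y' hA hx' => hya ▸ hno x' y' hA hx'⟩

end Diachromatic

section DeleteOutArcs

variable {V : Type*} [Fintype V] {A A' : V → V → Prop} {u : V}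

theorem dac_sub_one_le_dac_of_delete_out_arcs (hle : ∀ x y, A' x y → A x y)
    (hagree : ∀ x y, x ≠ u → A x y → A' x y) : dac A - 1 ≤ dac A' := by
  rcases eq_or_ne (dac A) 0 with h | h
  · omega
  obtain ⟨c, ⟨hsurj, hacyc⟩, -, hcomp⟩ := exists_coloring_dac h
  have hcomp' : IsCompleteOutside A' c {c u} := fun x y hxy hx _ => by
    obtain ⟨x', y', hA, hx', hy'⟩ := hcomp _ _ hxy
    exact ⟨x', y', hagree _ _ (fun h => hx (by simp [← hx', h])) hA, hx', hy'⟩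
  simpa [image_univ_of_surjective hsurj] using card_image_sub_card_le_dac {c u}
    (fun i => (hacyc i).of_subset subset_rfl fun x _ y _ => hle x y) hcomp'

lemma le_dac_of_delete_out_arcs_of_alone {k : ℕ} {c : V → Fin k} (hu : ¬ A u u)
    (hle : ∀ x y, A' x y → A x y) (hagree : ∀ x y, x ≠ u → A x y → A' x y)
    (hacyc : IsAcyclicColoring A' c) (hcomp : IsCompleteColoring A' c)
    (halone : ∀ w, c w = c u → w = u) : k ≤ dac A := by
  refine le_csSup (dac_bddAbove A) ⟨c, ⟨hacyc.1, fun i => ?_⟩, hcomp.1, fun i j hij => ?_⟩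
  · exact (hacyc.2 i).of_delete_out_arcs hu hagree subset_rfl fun hui y hy =>
      halone y (hy.trans hui.symm)
  · obtain ⟨x, y, hA, hx, hy⟩ := hcomp.2 i j hij
    exact ⟨x, y, hle x y hA, hx, hy⟩

lemma sub_one_le_dac_of_delete_out_arcs_of_shared {k : ℕ} {c : V → Fin k} (hu : ¬ A u u)
    (hle : ∀ x y, A' x y → A x y) (hagree : ∀ x y, x ≠ u → A x y → A' x y)
    (hacyc : IsAcyclicColoring A' c) (hcomp : IsCompleteColoring A' c)
    {w₀ : V} (hw₀u : w₀ ≠ u) (hw₀ : c w₀ = c u) : k - 1 ≤ dac A := by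
  classical
  let g : V → Option (Fin k) := fun w => if w = u then none else some (c w)
  have hgu : g u = none := if_pos rfl
  have hg {w : V} (hw : w ≠ u) : g w = some (c w) := if_neg hw
  have hsurj : Function.Surjective g
    | none => ⟨u, hgu⟩
    | some i => by
      by_cases hi : i = c u
      · exact ⟨w₀, by rw [hg hw₀u, hw₀, hi]⟩
      · obtain ⟨w, rfl⟩ := hacyc.1 i
        exact ⟨w, hg fun h => hi (h ▸ rfl)⟩
  have hgacyc (i : Option (Fin k)) : AcyclicSet A {w | g w = i} := by
    -- the new class `{u}` of colour `none` lies in the old class of `u`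
    refine (hacyc.2 (i.getD (c u))).of_delete_out_arcs hu hagree (fun w hw => ?_) ?_
    · by_cases hwu : w = u
      · simp [← show g w = i from hw, hwu, hgu]
      · simp [← show g w = i from hw, hg hwu]
    · intro hui y hy
      by_contra hyu
      have hyu' : g y = g u := (show g y = i from hy).trans (show g u = i from hui).symm
      rw [hg hyu, hgu] at hyu'
      exact Option.some_ne_none _ hyu'
  have hgcomp : IsCompleteOutside A g {none, some (c u)} := fun x y hxy hx hy => by
    have hxu : x ≠ u := fun h => hx (by simp [h, hgu])
    have hyu : y ≠ u := fun h => hy (by simp [h, hgu])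
    obtain ⟨x', y', hA, hx', hy'⟩ :=
      hcomp.2 (c x) (c y) fun h => hxy (by rw [hg hxu, hg hyu, h])
    have hx'u : x' ≠ u := fun h => hx (by simp [hg hxu, ← hx', h])
    have hy'u : y' ≠ u := fun h => hy (by simp [hg hyu, ← hy', h])
    exact ⟨x', y', hle x' y' hA, by rw [hg hx'u, hg hxu, hx'], by rw [hg hy'u, hg hyu, hy']⟩
  simpa [image_univ_of_surjective hsurj] using card_image_sub_card_le_dac _ hgacyc hgcomp

theorem dac_le_dac_add_one_of_delete_out_arcs (hu : ¬ A u u) (hle : ∀ x y, A' x y → A x y)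
    (hagree : ∀ x y, x ≠ u → A x y → A' x y) : dac A' ≤ dac A + 1 := by
  rcases eq_or_ne (dac A') 0 with h | h
  · omega
  obtain ⟨c, hacyc, hcomp⟩ := exists_coloring_dac h
  by_cases hshared : ∃ w, w ≠ u ∧ c w = c u
  · obtain ⟨w₀, hw₀u, hw₀⟩ := hshared
    have := sub_one_le_dac_of_delete_out_arcs_of_shared hu hle hagree hacyc hcomp hw₀u hw₀
    omega
  · have := le_dac_of_delete_out_arcs_of_alone hu hle hagree hacyc hcomp fun w hw =>
      by_contra fun hwu => hshared ⟨w, hwu, hw⟩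
    omega

end DeleteOutArcs

theorem stmt6_general {V : Type*} [Fintype V] (A : V → V → Prop)
    (hirr : ∀ v : V, ¬ A v v)
    (u v : V) :
    dac A - 1 ≤ dac (fun x y : V => A x y ∧ ¬(x = u ∧ y = v)) ∧
      dac (fun x y : V => A x y ∧ ¬(x = u ∧ y = v)) ≤ dac A + 1 := by
  have hle : ∀ x y, A x y ∧ ¬(x = u ∧ y = v) → A x y := fun _ _ h => h.1
  have hagree : ∀ x y, x ≠ u → A x y → A x y ∧ ¬(x = u ∧ y = v) :=
    fun _ _ hx h => ⟨h, fun h' => hx h'.1⟩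
  exact ⟨dac_sub_one_le_dac_of_delete_out_arcs hle hagree,
    dac_le_dac_add_one_of_delete_out_arcs (hirr u) hle hagree⟩

/-- For each arc `f = (u,v)` in a nonempty digraph `D`,
`dac(D) - 1 ≤ dac(D - f) ≤ dac(D) + 1`. -/
theorem stmt6 {V : Type*} [Fintype V] [DecidableEq V] (A : V → V → Prop)
    (hirr : ∀ v : V, ¬ A v v)
    (u v : V) (hf : A u v) :
    dac A - 1 ≤ dac (fun x y : V => A x y ∧ ¬(x = u ∧ y = v)) ∧
      dac (fun x y : V => A x y ∧ ¬(x = u ∧ y = v)) ≤ dac A + 1 :=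
  stmt6_general A hirr u v
end

section
/- For every digraph D of order n, dac(D) ≤ (dc(D) + n)/2. -/
lemma acyclic_of_subsingleton {V : Type*} {A : V → V → Prop} (hirr : ∀ v, ¬ A v v)
    {S : Set V} (hS : S.Subsingleton) : AcyclicSet A S := by
  intro v hv
  obtain ⟨w, ⟨h1, h2, h3⟩, -⟩ := (Relation.TransGen.head'_iff).mp hv
  have := hS h1 h2
  subst this
  exact hirr v h3

lemma card_mem_acyclicSet {V : Type*} [Fintype V] (A : V → V → Prop)
    (hirr : ∀ v, ¬ A v v) :
    Fintype.card V ∈ {k | ∃ c : V → Fin k, IsAcyclicColoring A c} := by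
  classical
  refine ⟨Fintype.equivFin V, (Fintype.equivFin V).surjective, fun i => ?_⟩
  apply acyclic_of_subsingleton hirr
  intro x hx y hy
  exact (Fintype.equivFin V).injective (hx.trans hy.symm)

lemma key {V : Type*} [Fintype V] (A : V → V → Prop) (hirr : ∀ v, ¬ A v v)
    {k : ℕ} (hk : ∃ c : V → Fin k, IsAcyclicColoring A c ∧ IsCompleteColoring A c) :
    2 * k ≤ dc A + Fintype.card V := by
  classical
  obtain ⟨c, ⟨hsurj, _⟩, ⟨_, hcomp⟩⟩ := hk
  set P : Fin k → Prop := fun i => ∀ u v : V, c u = i → c v = i → u = v with hP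
  set T : Finset (Fin k) := Finset.univ.filter P with hT
  set s := T.card with hs
  set t := (Finset.univ.filter (fun i => ¬ P i)).card with ht
  have hst : s + t = k := by
    rw [hs, ht, hT, Finset.card_filter_add_card_filter_not]
    simp
  -- n ≥ s + 2t
  have hn : s + 2 * t ≤ Fintype.card V := by
    have hcard : Fintype.card V =
        ∑ i : Fin k, (Finset.univ.filter (fun v => c v = i)).card := by
      rw [← Finset.card_univ, Finset.card_eq_sum_card_fiberwise
        (fun x _ => Finset.mem_univ (c x))]
    have hsum : ∑ i ∈ Finset.univ.filter P, (Finset.univ.filter (fun v => c v = i)).card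
        + ∑ i ∈ Finset.univ.filter (fun i => ¬ P i), (Finset.univ.filter (fun v => c v = i)).card
        = Fintype.card V := by
      rw [Finset.sum_filter_add_sum_filter_not]
      exact hcard.symm
    have h1 : s ≤ ∑ i ∈ Finset.univ.filter P, (Finset.univ.filter (fun v => c v = i)).card := by
      rw [hs, hT, Finset.card_eq_sum_ones]
      refine Finset.sum_le_sum (fun i _ => ?_)
      obtain ⟨v, hv⟩ := hsurj i
      exact Finset.card_pos.mpr ⟨v, by simp [hv]⟩
    have h2 : 2 * t ≤ ∑ i ∈ Finset.univ.filter (fun i => ¬ P i),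
        (Finset.univ.filter (fun v => c v = i)).card := by
      have := Finset.card_nsmul_le_sum (Finset.univ.filter (fun i => ¬ P i))
        (fun i => (Finset.univ.filter (fun v => c v = i)).card) 2 (fun i hi => ?_)
      · rw [smul_eq_mul] at this
        omega
      · have hnp : ¬ P i := (Finset.mem_filter.mp hi).2
        rw [hP] at hnp
        have hex : ∃ u v : V, c u = i ∧ c v = i ∧ u ≠ v := by
          by_contra hcon
          push_neg at hcon
          exact hnp (fun u v hu hv => hcon u v hu hv)
        obtain ⟨u, v, hu, hv, hne⟩ := hex
        exact Finset.one_lt_card.mpr ⟨u, by simp [hu], v, by simp [hv], hne⟩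
    omega
  -- dc ≥ s
  have hdc : s ≤ dc A := by
    have hne : {m | ∃ c : V → Fin m, IsAcyclicColoring A c}.Nonempty :=
      ⟨_, card_mem_acyclicSet A hirr⟩
    obtain ⟨c', hsurj', hacyc'⟩ := Nat.sInf_mem hne
    -- choose representative of each class
    have hw : ∀ i : Fin k, c ((hsurj i).choose) = i := fun i => (hsurj i).choose_spec
    set w : Fin k → V := fun i => (hsurj i).choose with hwdef
    have harc : ∀ i ∈ T, ∀ j ∈ T, i ≠ j → A (w i) (w j) := by
      intro i hi j hj hij
      obtain ⟨u, v, huv, hu, hv⟩ := hcomp i j hij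
      have hPi : P i := (Finset.mem_filter.mp hi).2
      have hPj : P j := (Finset.mem_filter.mp hj).2
      have : u = w i := hPi u (w i) hu (hw i)
      have hv' : v = w j := hPj v (w j) hv (hw j)
      subst this; subst hv'
      exact huv
    have hinj : Set.InjOn (fun i => c' (w i)) ↑T := by
      intro i hi j hj heq
      by_contra hij
      have hij' : i ≠ j := hij
      have ha1 := harc i hi j hj hij'
      have ha2 := harc j hj i hi (Ne.symm hij')
      have hwij : w i ≠ w j := by
        intro h
        exact hij' ((hw i).symm.trans ((congrArg c h).trans (hw j)))
      apply hacyc' (c' (w i)) (w i)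
      refine Relation.TransGen.head ⟨rfl, ?_, ha1⟩ (Relation.TransGen.single ⟨?_, rfl, ha2⟩)
      · exact heq.symm
      · exact heq.symm
    calc s = T.card := rfl
      _ ≤ (Finset.univ : Finset (Fin (dc A))).card :=
          Finset.card_le_card_of_injOn _ (fun _ _ => Finset.mem_univ _) hinj
      _ = dc A := by simp
  omega

/-- For every digraph `D` of order `n`, `dac(D) ≤ (dc(D) + n)/2`. -/
theorem stmt18 {V : Type*} [Fintype V] (A : V → V → Prop)
    (hirr : ∀ v : V, ¬ A v v) :
    (dac A : ℝ) ≤ ((dc A : ℝ) + Fintype.card V) / 2 := by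
  classical
  have hnat : 2 * dac A ≤ dc A + Fintype.card V := by
    rcases Set.eq_empty_or_nonempty
      {k | ∃ c : V → Fin k, IsAcyclicColoring A c ∧ IsCompleteColoring A c} with h | h
    · rw [dac, h]
      simp
    · have hb : dac A ≤ (dc A + Fintype.card V) / 2 := by
        refine csSup_le h (fun m hm => ?_)
        have := key A hirr hm
        omega
      omega
  rw [le_div_iff₀ (by norm_num : (0:ℝ) < 2)]
  have hr : ((2 * dac A : ℕ) : ℝ) ≤ ((dc A + Fintype.card V : ℕ) : ℝ) := Nat.cast_le.mpr hnat
  push_cast at hr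
  linarith
end

section
/- If D is a digraph of order n, then dac(D) + dc(Dᶜ) ≤ ⌈3n/2⌉ and dac(D)·dc(Dᶜ) ≤ ((3n+1)/4)², where Dᶜ is the complement of D. -/
lemma no_transgen_self {V : Type*} {R : V → V → Prop} (h : ∀ x y, ¬ R x y) (v : V) :
    ¬ Relation.TransGen R v v := by
  intro ht
  cases ht with
  | single r => exact h _ _ r
  | tail _ r => exact h _ _ r

/-- A set with no internal arcs is acyclic. -/
lemma acyclicSet_of_no_arcs {V : Type*} {A : V → V → Prop} {S : Set V}
    (h : ∀ x ∈ S, ∀ y ∈ S, ¬ A x y) : AcyclicSet A S := by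
  intro v
  exact no_transgen_self (fun x y hxy => h x hxy.1 y hxy.2.1 hxy.2.2) v

/-- A subsingleton set is acyclic for an irreflexive arc relation. -/
lemma acyclicSet_of_subsingleton {V : Type*} {A : V → V → Prop}
    (hirr : ∀ v : V, ¬ A v v) {S : Set V} (h : ∀ x ∈ S, ∀ y ∈ S, x = y) :
    AcyclicSet A S := by
  apply acyclicSet_of_no_arcs
  intro x hx y hy hA
  exact hirr x (by rwa [h x hx y hy] at hA ⊢)

/-- The dichromatic number is at most the number of vertices. -/
lemma dc_le_card {V : Type*} [Fintype V] [DecidableEq V] {A : V → V → Prop}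
    (hirr : ∀ v : V, ¬ A v v) : dc A ≤ Fintype.card V := by
  apply Nat.sInf_le
  refine ⟨(Fintype.equivFin V : V → Fin (Fintype.card V)), (Fintype.equivFin V).surjective, ?_⟩
  intro i
  apply acyclicSet_of_subsingleton hirr
  intro x hx y hy
  exact (Fintype.equivFin V).injective (hx.trans hy.symm)

/-- Nordhaus–Gaddum relations: for a digraph `D` of order `n`,
`dac(D) + dc(Dᶜ) ≤ ⌈3n/2⌉` and `dac(D)·dc(Dᶜ) ≤ ((3n+1)/4)²`. -/
theorem stmt19 {V : Type*} [Fintype V] [DecidableEq V] (A : V → V → Prop)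
    (hirr : ∀ v : V, ¬ A v v) :
    dac A + dc (fun x y : V => x ≠ y ∧ ¬ A x y) ≤ (3 * Fintype.card V + 1) / 2 ∧
      (dac A : ℝ) * (dc (fun x y : V => x ≠ y ∧ ¬ A x y) : ℝ) ≤
        ((3 * (Fintype.card V : ℝ) + 1) / 4) ^ 2 := by
  classical
  set n := Fintype.card V with hn
  set Ac : V → V → Prop := fun x y : V => x ≠ y ∧ ¬ A x y with hAc
  have hAc_irr : ∀ v : V, ¬ Ac v v := fun v hv => hv.1 rfl
  have hdc_n : dc Ac ≤ n := dc_le_card hAc_irr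
  -- key inequality
  have hkey : 2 * (dac A + dc Ac) ≤ 3 * n + 1 := by
    set Sdac := {k | ∃ c : V → Fin k, IsAcyclicColoring A c ∧ IsCompleteColoring A c}
      with hSdac
    by_cases hne : Sdac.Nonempty
    · have hbdd : BddAbove Sdac := by
        refine ⟨n, fun k hk => ?_⟩
        obtain ⟨c, ⟨hsurj, -⟩, -⟩ := hk
        simpa using Fintype.card_le_of_surjective c hsurj
      set k := dac A with hk
      have hmem : k ∈ Sdac := Nat.sSup_mem hne hbdd
      obtain ⟨c, ⟨hsurj, hacyc⟩, ⟨-, hcomp⟩⟩ := hmem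
      -- singleton-class vertices
      set S : Finset V := Finset.univ.filter (fun v => ∀ u, c u = c v → u = v) with hS
      -- counting: 2 * k ≤ n + S.card
      have hcount : 2 * k ≤ n + S.card := by
        have h1 : (Finset.univ : Finset V).card =
            ∑ i : Fin k, (Finset.univ.filter fun v => c v = i).card :=
          Finset.card_eq_sum_card_fiberwise (fun x _ => Finset.mem_univ (c x))
        have h2 : S.card = ∑ i : Fin k, (S.filter fun v => c v = i).card :=
          Finset.card_eq_sum_card_fiberwise (fun x _ => Finset.mem_univ (c x))
        have h3 : ∀ i : Fin k,
            2 ≤ (Finset.univ.filter fun v => c v = i).card + (S.filter fun v => c v = i).card := by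
          intro i
          obtain ⟨v, hv⟩ := hsurj i
          have hvmem : v ∈ Finset.univ.filter fun v => c v = i := by
            simp [hv]
          rcases Nat.lt_or_ge (Finset.univ.filter fun v => c v = i).card 2 with hlt | hge
          · have hpos : 0 < (Finset.univ.filter fun v => c v = i).card :=
              Finset.card_pos.mpr ⟨v, hvmem⟩
            have hone : (Finset.univ.filter fun v => c v = i).card = 1 := by omega
            obtain ⟨a, ha⟩ := Finset.card_eq_one.mp hone
            have hva : v = a := by
              have := hvmem
              rw [ha] at this
              simpa using this
            have hvS : v ∈ S := by
              simp only [hS, Finset.mem_filter, Finset.mem_univ, true_and]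
              intro u hu
              have hu' : u ∈ Finset.univ.filter fun w => c w = i := by simp [hu, hv]
              rw [ha] at hu'
              simp only [Finset.mem_singleton] at hu'
              rw [hu', ← hva]
            have : v ∈ S.filter fun w => c w = i := by
              simp [Finset.mem_filter, hvS, hv]
            have hpos2 : 0 < (S.filter fun w => c w = i).card :=
              Finset.card_pos.mpr ⟨v, this⟩
            omega
          · omega
        have h4 : ∑ i : Fin k, (2 : ℕ) ≤
            ∑ i : Fin k, ((Finset.univ.filter fun v => c v = i).card
              + (S.filter fun v => c v = i).card) :=
          Finset.sum_le_sum (fun i _ => h3 i)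
        rw [Finset.sum_add_distrib, ← h1, ← h2] at h4
        simpa [Finset.card_univ, mul_comm, ← hn] using h4
      -- arcs within S in A
      have hSarc : ∀ u ∈ S, ∀ v ∈ S, u ≠ v → A u v := by
        intro u hu v hv huv
        simp only [hS, Finset.mem_filter, Finset.mem_univ, true_and] at hu hv
        have hcuv : c u ≠ c v := fun h => huv (hu v h.symm).symm
        obtain ⟨x, y, hxy, hx, hy⟩ := hcomp (c u) (c v) hcuv
        have hxu : x = u := hu x hx
        have hyv : y = v := hv y hy
        rwa [hxu, hyv] at hxy
      -- bound dc Ac when S nonempty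
      rcases Finset.eq_empty_or_nonempty S with hSe | hSne
      · have : S.card = 0 := by rw [hSe]; simp
        omega
      · -- construct coloring of Ac with Sᶜ.card + 1 colors
        set T : Finset V := Sᶜ with hT
        set m := T.card with hm
        set c' : V → Fin (m + 1) := fun v =>
          if h : v ∈ T then (T.equivFin ⟨v, h⟩).succ else 0 with hc'
        have hc'T : ∀ v (h : v ∈ T), c' v = (T.equivFin ⟨v, h⟩).succ := by
          intro v h; simp [hc', h]
        have hc'S : ∀ v, v ∉ T → c' v = 0 := by
          intro v h; simp [hc', h]
        have hdc2 : dc Ac ≤ m + 1 := by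
          apply Nat.sInf_le
          refine ⟨c', ?_, ?_⟩
          · intro j
            refine Fin.cases ?_ ?_ j
            · obtain ⟨v, hv⟩ := hSne
              exact ⟨v, hc'S v (by simp [hT, hv])⟩
            · intro i
              refine ⟨(T.equivFin.symm i).1, ?_⟩
              rw [hc'T _ (T.equivFin.symm i).2]
              congr 1
              exact Equiv.apply_symm_apply T.equivFin i
          · intro j
            refine Fin.cases ?_ ?_ j
            · -- class 0 = S, no Ac-arcs inside
              apply acyclicSet_of_no_arcs
              intro x hx y hy hA
              simp only [Set.mem_setOf_eq] at hx hy
              have hxS : x ∈ S := by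
                by_contra hxS
                have : x ∈ T := by simp [hT, hxS]
                rw [hc'T x this] at hx
                exact Fin.succ_ne_zero _ hx
              have hyS : y ∈ S := by
                by_contra hyS
                have : y ∈ T := by simp [hT, hyS]
                rw [hc'T y this] at hy
                exact Fin.succ_ne_zero _ hy
              rcases hA with ⟨hxy, hnA⟩
              exact hnA (hSarc x hxS y hyS hxy)
            · intro i
              apply acyclicSet_of_subsingleton hAc_irr
              intro x hx y hy
              simp only [Set.mem_setOf_eq] at hx hy
              have hxT : x ∈ T := by
                by_contra hxT
                rw [hc'S x hxT] at hx
                exact (Fin.succ_ne_zero i) hx.symm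
              have hyT : y ∈ T := by
                by_contra hyT
                rw [hc'S y hyT] at hy
                exact (Fin.succ_ne_zero i) hy.symm
              rw [hc'T x hxT] at hx
              rw [hc'T y hyT] at hy
              have : T.equivFin ⟨x, hxT⟩ = T.equivFin ⟨y, hyT⟩ := by
                apply Fin.succ_injective
                rw [hx, hy]
              have := T.equivFin.injective this
              exact congrArg Subtype.val this
        have hmcard : m = n - S.card := by
          rw [hm, hT, Finset.card_compl, hn]
        have hScard_le : S.card ≤ n := by
          rw [hn]; exact Finset.card_le_univ S
        have hSpos : 0 < S.card := Finset.card_pos.mpr hSne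
        omega
    · have : dac A = 0 := by
        rw [dac, ← hSdac, Set.not_nonempty_iff_eq_empty.mp hne]
        simpa using csSup_empty
      omega
  constructor
  · omega
  · have hr : (2 : ℝ) * ((dac A : ℝ) + (dc Ac : ℝ)) ≤ 3 * (n : ℝ) + 1 := by
      exact_mod_cast hkey
    have h1 : (0 : ℝ) ≤ (dac A : ℝ) := Nat.cast_nonneg _
    have h2 : (0 : ℝ) ≤ (dc Ac : ℝ) := Nat.cast_nonneg _
    nlinarith [sq_nonneg ((dac A : ℝ) - (dc Ac : ℝ)), sq_nonneg ((dac A : ℝ) + (dc Ac : ℝ))]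
end
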